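/- arXiv:1610.06995 — 4 statements merged into one kernel-verified Lean document; each statement's English description precedes it below -/
import Mathlib

section
/- For real x ∈ [0,1], |arctan(x) − (π/4 · x + 0.273 x (1 − x))| ≤ 0.0053. -/
open Real

lemma arctan_upper (x : ℝ) (hx : 0 ≤ x) : Real.arctan x ≤ x - x^3/3 + x^5/5 := by
  have H : MonotoneOn (fun y : ℝ => y - y^3/3 + y^5/5 - Real.arctan y) (Set.Ici 0) := by
    have hd : ∀ y : ℝ, HasDerivAt (fun y : ℝ => y - y^3/3 + y^5/5 - Real.arctan y)
        (1 - y^2 + y^4 - 1/(1+y^2)) y := by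
      intro y
      have h1 := Real.hasDerivAt_arctan y
      have h2 : HasDerivAt (fun y : ℝ => y - y^3/3 + y^5/5) (1 - y^2 + y^4) y := by
        have := (((hasDerivAt_id y).sub ((hasDerivAt_pow 3 y).div_const 3)).add
          ((hasDerivAt_pow 5 y).div_const 5))
        refine this.congr_deriv ?_
        ring
      exact h2.sub h1
    apply monotoneOn_of_deriv_nonneg (convex_Ici 0)
    · exact fun y _ => (hd y).continuousAt.continuousWithinAt
    · exact fun y _ => ((hd y).differentiableAt).differentiableWithinAt
    · intro y hy
      rw [(hd y).deriv]
      have hy2 : (0:ℝ) < 1 + y^2 := by positivity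
      rw [sub_nonneg, div_le_iff₀ hy2]
      simp only [interior_Ici, Set.mem_Ioi] at hy
      nlinarith [pow_pos hy 6]
  have h0 := H (Set.self_mem_Ici) hx hx
  simp [Real.arctan_zero] at h0
  linarith

lemma arctan_lower (x : ℝ) (hx : 0 ≤ x) : x - x^3/3 + x^5/5 - x^7/7 ≤ Real.arctan x := by
  have H : MonotoneOn (fun y : ℝ => Real.arctan y - (y - y^3/3 + y^5/5 - y^7/7)) (Set.Ici 0) := by
    have hd : ∀ y : ℝ, HasDerivAt (fun y : ℝ => Real.arctan y - (y - y^3/3 + y^5/5 - y^7/7))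
        (1/(1+y^2) - (1 - y^2 + y^4 - y^6)) y := by
      intro y
      have h1 := Real.hasDerivAt_arctan y
      have h2 : HasDerivAt (fun y : ℝ => y - y^3/3 + y^5/5 - y^7/7) (1 - y^2 + y^4 - y^6) y := by
        have := ((((hasDerivAt_id y).sub ((hasDerivAt_pow 3 y).div_const 3)).add
          ((hasDerivAt_pow 5 y).div_const 5)).sub ((hasDerivAt_pow 7 y).div_const 7))
        refine this.congr_deriv ?_
        ring
      exact h1.sub h2
    apply monotoneOn_of_deriv_nonneg (convex_Ici 0)
    · exact fun y _ => (hd y).continuousAt.continuousWithinAt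
    · exact fun y _ => ((hd y).differentiableAt).differentiableWithinAt
    · intro y hy
      rw [(hd y).deriv]
      have hy2 : (0:ℝ) < 1 + y^2 := by positivity
      rw [sub_nonneg, le_div_iff₀ hy2]
      simp only [interior_Ici, Set.mem_Ioi] at hy
      nlinarith [pow_pos hy 8]
  have h0 := H (Set.self_mem_Ici) hx hx
  simp [Real.arctan_zero] at h0
  linarith

set_option maxHeartbeats 1600000 in
lemma arctan_approx_case2 (t : ℝ) (h0 : 0 ≤ t) (h3 : t ≤ 1/3) :
    |(Real.pi/4 - Real.arctan t) -
      (Real.pi / 4 * ((1-t)/(1+t)) + 0.273 * ((1-t)/(1+t)) * (1 - (1-t)/(1+t)))| ≤ 0.0053 := by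
  have hpi1 := Real.pi_gt_d6
  have hpi2 := Real.pi_lt_d6
  have h1t : (0:ℝ) < 1 + t := by linarith
  have hsq : (0:ℝ) < (1+t)^2 := by positivity
  have key : (Real.pi/4 - Real.arctan t) -
      (Real.pi / 4 * ((1-t)/(1+t)) + 0.273 * ((1-t)/(1+t)) * (1 - (1-t)/(1+t)))
      = (Real.pi/2 * t * (1+t) - 0.546 * t * (1-t) - (1+t)^2 * Real.arctan t) / (1+t)^2 := by
    field_simp
    ring
  have hU := arctan_upper t h0
  have hL := arctan_lower t h0
  have hUb : (1+t)^2 * Real.arctan t ≤ (1+t)^2 * (t - t^3/3 + t^5/5) :=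
    mul_le_mul_of_nonneg_left hU hsq.le
  have hLb : (1+t)^2 * (t - t^3/3 + t^5/5 - t^7/7) ≤ (1+t)^2 * Real.arctan t :=
    mul_le_mul_of_nonneg_left hL hsq.le
  rw [key, abs_le]
  constructor
  · rw [le_div_iff₀ hsq]
    nlinarith [mul_nonneg h0 (sub_nonneg.2 h3), sq_nonneg (t - 1/4), sq_nonneg t,
      mul_nonneg (mul_nonneg h0 h0) (sub_nonneg.2 h3),
      mul_nonneg (mul_nonneg (mul_nonneg h0 h0) h0) (sub_nonneg.2 h3),
      mul_nonneg (mul_nonneg (mul_nonneg (mul_nonneg h0 h0) h0) h0) (sub_nonneg.2 h3)]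
  · rw [div_le_iff₀ hsq]
    nlinarith [mul_nonneg h0 (sub_nonneg.2 h3), sq_nonneg (t - 1/4), sq_nonneg t,
      mul_nonneg (mul_nonneg h0 h0) (sub_nonneg.2 h3),
      mul_nonneg (mul_nonneg (mul_nonneg h0 h0) h0) (sub_nonneg.2 h3),
      mul_nonneg (mul_nonneg (mul_nonneg (mul_nonneg h0 h0) h0) h0) (sub_nonneg.2 h3)]

/-- Second-order polynomial approximation of `arctan` on `[0,1]`:
`|arctan x − (π/4 · x + 0.273 x (1 − x))| ≤ 0.0053`. -/
theorem arctan_quadratic_approx (x : ℝ) (hx0 : 0 ≤ x) (hx1 : x ≤ 1) :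
    |Real.arctan x - (Real.pi / 4 * x + 0.273 * x * (1 - x))| ≤ 0.0053 := by
  have hpi1 := Real.pi_gt_d6
  have hpi2 := Real.pi_lt_d6
  rcases le_or_gt x (1/2) with hc | hc
  · have hU := arctan_upper x hx0
    have hL := arctan_lower x hx0
    rw [abs_le]
    constructor
    · nlinarith [sq_nonneg x, sq_nonneg (x - 1/8), mul_nonneg hx0 (sub_nonneg.2 hc),
        mul_nonneg (mul_nonneg hx0 hx0) (sub_nonneg.2 hc), sq_nonneg (x*x),
        mul_nonneg (mul_nonneg (mul_nonneg hx0 hx0) hx0) (sub_nonneg.2 hc)]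
    · nlinarith [sq_nonneg x, sq_nonneg (x - 1/8), mul_nonneg hx0 (sub_nonneg.2 hc),
        mul_nonneg (mul_nonneg hx0 hx0) (sub_nonneg.2 hc),
        mul_nonneg (mul_nonneg (mul_nonneg hx0 hx0) hx0) (sub_nonneg.2 hc)]
  · have hx1p : (0:ℝ) < 1 + x := by linarith
    have ht0 : 0 ≤ (1 - x) / (1 + x) := div_nonneg (by linarith) hx1p.le
    have ht3 : (1 - x) / (1 + x) ≤ 1/3 := by
      rw [div_le_iff₀ hx1p]; linarith
    have hxe : (1 - (1 - x) / (1 + x)) / (1 + (1 - x) / (1 + x)) = x := by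
      rw [div_eq_iff (by positivity)]
      field_simp
      ring
    have hxt : x * ((1 - x) / (1 + x)) < 1 := by
      rw [mul_div_assoc']
      rw [div_lt_one hx1p]
      nlinarith
    have harc : Real.arctan x + Real.arctan ((1 - x) / (1 + x)) = Real.pi / 4 := by
      have hadd := Real.arctan_add hxt
      have hxx : (x + (1 - x) / (1 + x)) / (1 - x * ((1 - x) / (1 + x))) = 1 := by
        rw [div_eq_one_iff_eq (by linarith)]
        field_simp
        ring
      rw [hadd, hxx, Real.arctan_one]
    have h2 := arctan_approx_case2 ((1 - x) / (1 + x)) ht0 ht3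
    rw [hxe] at h2
    have : Real.arctan x = Real.pi/4 - Real.arctan ((1 - x) / (1 + x)) := by linarith
    rw [this]
    convert h2 using 3
end

section
/- For s > 0, P > 0, α > 2, ∫₀^∞ (1 − 1/(1 + s P u^{−α})^c) · 2πλ u du = πλ (sP)^{2/α} c B(1 − 2/α, c + 2/α), where B is the Beta function and c ≥ 1 is an integer. -/
open MeasureTheory Real

noncomputable def eulerBeta (p q : ℝ) : ℝ := Real.Gamma p * Real.Gamma q / Real.Gamma (p + q)

lemma complexBeta_eq (p q : ℝ) :
    Complex.betaIntegral p q =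
      ((∫ x in Set.Ioo (0:ℝ) 1, x ^ (p - 1) * (1 - x) ^ (q - 1) : ℝ) : ℂ) := by
  rw [Complex.betaIntegral, intervalIntegral.integral_of_le zero_le_one,
    MeasureTheory.integral_Ioc_eq_integral_Ioo]
  rw [show (∫ x in Set.Ioo (0:ℝ) 1, (x:ℂ) ^ ((p:ℂ) - 1) * (1 - (x:ℂ)) ^ ((q:ℂ) - 1))
      = ∫ x in Set.Ioo (0:ℝ) 1, ((x ^ (p - 1) * (1 - x) ^ (q - 1) : ℝ) : ℂ) from
    setIntegral_congr_fun measurableSet_Ioo fun x hx => by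
      obtain ⟨hx0, hx1⟩ := hx
      rw [show ((p:ℂ) - 1) = ((p - 1 : ℝ) : ℂ) by push_cast; ring,
        show ((q:ℂ) - 1) = ((q - 1 : ℝ) : ℂ) by push_cast; ring,
        show (1 - (x:ℂ)) = ((1 - x : ℝ) : ℂ) by push_cast; ring,
        ← Complex.ofReal_cpow hx0.le, ← Complex.ofReal_cpow (by linarith : (0:ℝ) ≤ 1 - x),
        ← Complex.ofReal_mul]]
  exact integral_ofReal

lemma realBeta_integral (p q : ℝ) (hp : 0 < p) (hq : 0 < q) :
    ∫ x in Set.Ioo (0:ℝ) 1, x ^ (p - 1) * (1 - x) ^ (q - 1) = eulerBeta p q := by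
  have h := Complex.Gamma_mul_Gamma_eq_betaIntegral (s := p) (t := q)
    (by simpa using hp) (by simpa using hq)
  rw [complexBeta_eq] at h
  rw [← Complex.ofReal_add, Complex.Gamma_ofReal, Complex.Gamma_ofReal, Complex.Gamma_ofReal,
    ← Complex.ofReal_mul, ← Complex.ofReal_mul] at h
  have h' : Real.Gamma p * Real.Gamma q
      = Real.Gamma (p + q) * ∫ x in Set.Ioo (0:ℝ) 1, x ^ (p - 1) * (1 - x) ^ (q - 1) := by
    exact_mod_cast h
  have hG : Real.Gamma (p + q) ≠ 0 := (Real.Gamma_pos_of_pos (by linarith)).ne'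
  rw [eulerBeta, eq_div_iff hG]
  linarith [h']

lemma realBeta_integrable (p q : ℝ) (hp : 0 < p) (hq : 0 < q) :
    IntegrableOn (fun x : ℝ => x ^ (p - 1) * (1 - x) ^ (q - 1)) (Set.Ioo 0 1) := by
  have h := (Complex.betaIntegral_convergent (u := p) (v := q)
    (by simpa using hp) (by simpa using hq)).1
  have h2 : IntegrableOn (fun x : ℝ =>
      ((x : ℂ) ^ ((p : ℂ) - 1) * (1 - (x : ℂ)) ^ ((q : ℂ) - 1)).re) (Set.Ioo 0 1) := by
    exact ((h.mono_set Set.Ioo_subset_Ioc_self).re)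
  refine h2.congr_fun (fun x hx => ?_) measurableSet_Ioo
  obtain ⟨hx0, hx1⟩ := hx
  beta_reduce
  rw [show ((p:ℂ) - 1) = ((p - 1 : ℝ) : ℂ) by push_cast; ring,
    show ((q:ℂ) - 1) = ((q - 1 : ℝ) : ℂ) by push_cast; ring,
    show (1 - (x:ℂ)) = ((1 - x : ℝ) : ℂ) by push_cast; ring,
    ← Complex.ofReal_cpow hx0.le, ← Complex.ofReal_cpow (by linarith),
    ← Complex.ofReal_mul, Complex.ofReal_re]

section
variable (p q : ℝ)

lemma subst_image : (fun x : ℝ => x / (1 - x)) '' Set.Ioo 0 1 = Set.Ioi 0 := by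
  ext t
  constructor
  · rintro ⟨x, ⟨hx0, hx1⟩, rfl⟩
    exact div_pos hx0 (by linarith)
  · intro ht
    refine ⟨t / (1 + t), ⟨div_pos ht (by linarith [Set.mem_Ioi.mp ht]), ?_⟩, ?_⟩
    · rw [div_lt_one (by linarith [Set.mem_Ioi.mp ht])]; linarith [Set.mem_Ioi.mp ht]
    · have ht' : (0:ℝ) < t := ht
      field_simp
      ring

lemma subst_inj : Set.InjOn (fun x : ℝ => x / (1 - x)) (Set.Ioo 0 1) := by
  intro x ⟨hx0, hx1⟩ y ⟨hy0, hy1⟩ h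
  simp only at h
  have hx : (1:ℝ) - x ≠ 0 := by linarith
  have hy : (1:ℝ) - y ≠ 0 := by linarith
  field_simp at h
  linarith

lemma subst_deriv {x : ℝ} (hx : x ∈ Set.Ioo (0:ℝ) 1) :
    HasDerivWithinAt (fun x : ℝ => x / (1 - x)) ((1 - x) ^ (-2 : ℝ)) (Set.Ioo 0 1) x := by
  obtain ⟨hx0, hx1⟩ := hx
  have h1 : (1:ℝ) - x ≠ 0 := by linarith
  have : HasDerivAt (fun x : ℝ => x / (1 - x))
      ((1 * (1 - x) - x * (0 - 1)) / (1 - x) ^ 2) x := by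
    exact (hasDerivAt_id x).div ((hasDerivAt_const x 1).sub (hasDerivAt_id x)) h1
  refine this.hasDerivWithinAt.congr_deriv ?_
  rw [rpow_neg (by linarith), show ((2:ℝ)) = ((2:ℕ):ℝ) by norm_num, rpow_natCast]
  field_simp
  ring

lemma integrand_eq (hp : 0 < p) (hq : 0 < q) {x : ℝ} (hx : x ∈ Set.Ioo (0:ℝ) 1) :
    |(1 - x) ^ (-2 : ℝ)| • ((x / (1 - x)) ^ (p - 1) * (1 + x / (1 - x)) ^ (-(p + q)))
      = x ^ (p - 1) * (1 - x) ^ (q - 1) := by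
  obtain ⟨hx0, hx1⟩ := hx
  have h1 : (0:ℝ) < 1 - x := by linarith
  have h2 : 1 + x / (1 - x) = (1 - x)⁻¹ := by field_simp; ring
  rw [smul_eq_mul, abs_of_pos (rpow_pos_of_pos h1 _), h2, div_rpow hx0.le h1.le,
    inv_rpow h1.le, div_eq_mul_inv, ← rpow_neg h1.le, ← rpow_neg h1.le, neg_neg]
  have key : ∀ a b : ℝ, (1-x) ^ a * (1-x) ^ b = (1-x) ^ (a+b) := fun a b => (rpow_add h1 a b).symm
  calc (1-x) ^ (-2:ℝ) * (x ^ (p-1) * (1-x) ^ (-(p-1)) * (1-x) ^ (p+q))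
      = x ^ (p-1) * ((1-x) ^ (-2:ℝ) * (1-x) ^ (-(p-1)) * (1-x) ^ (p+q)) := by ring
    _ = x ^ (p-1) * (1-x) ^ (q-1) := by rw [key, key]; ring_nf

end

section
variable {p q : ℝ}

lemma integrableOn_Ioi_rpow_one_add (hp : 0 < p) (hq : 0 < q)
    (hIoo : IntegrableOn (fun x : ℝ => x ^ (p - 1) * (1 - x) ^ (q - 1)) (Set.Ioo 0 1)) :
    IntegrableOn (fun t : ℝ => t ^ (p - 1) * (1 + t) ^ (-(p + q))) (Set.Ioi 0) := by
  rw [← subst_image, integrableOn_image_iff_integrableOn_abs_deriv_smul measurableSet_Ioo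
    (fun x hx => subst_deriv hx) subst_inj]
  exact hIoo.congr_fun (fun x hx => (integrand_eq p q hp hq hx).symm) measurableSet_Ioo

lemma integral_Ioi_rpow_one_add (hp : 0 < p) (hq : 0 < q)
    (hval : ∫ x in Set.Ioo (0:ℝ) 1, x ^ (p - 1) * (1 - x) ^ (q - 1) = Real.Gamma p * Real.Gamma q / Real.Gamma (p + q)) :
    ∫ t in Set.Ioi (0:ℝ), t ^ (p - 1) * (1 + t) ^ (-(p + q))
      = Real.Gamma p * Real.Gamma q / Real.Gamma (p + q) := by
  rw [← subst_image, integral_image_eq_integral_abs_deriv_smul measurableSet_Ioo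
    (fun x hx => subst_deriv hx) subst_inj, ← hval]
  exact setIntegral_congr_fun measurableSet_Ioo (fun x hx => integrand_eq p q hp hq hx)

end

lemma gamma_telescope (p : ℝ) (hp : 0 < p) : ∀ m : ℕ,
    ∑ k ∈ Finset.range (m + 1), p * Real.Gamma (p + k) / (Nat.factorial k : ℝ)
      = Real.Gamma (p + m + 1) / (Nat.factorial m : ℝ) := by
  intro m
  induction m with
  | zero =>
    simp [Real.Gamma_add_one hp.ne', mul_comm]
  | succ n ih =>
    rw [Finset.sum_range_succ, ih]
    have hpos : (0:ℝ) < p + n + 1 := by positivity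
    rw [show p + ((n:ℕ)+1:ℕ) = (p + n + 1 : ℝ) by push_cast; ring,
      show (p + (n:ℝ) + 1 + 1) = (p + n + 1) + 1 by ring,
      Real.Gamma_add_one hpos.ne', Nat.factorial_succ]
    have hfn : ((Nat.factorial n : ℝ)) ≠ 0 := by positivity
    push_cast
    field_simp
    ring

section
variable {a α : ℝ} (ha : 0 < a) (hα : 2 < α)
include ha hα

lemma psi_image : (fun t : ℝ => (a * t) ^ (1/α)) '' Set.Ioi 0 = Set.Ioi 0 := by
  have hα0 : (0:ℝ) < α := by linarith
  ext u
  constructor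
  · rintro ⟨t, ht, rfl⟩
    exact rpow_pos_of_pos (mul_pos ha ht) _
  · intro hu
    have hu' : (0:ℝ) < u := hu
    refine ⟨u ^ α / a, div_pos (rpow_pos_of_pos hu' _) ha, ?_⟩
    simp only
    rw [mul_div_cancel₀ _ ha.ne', ← rpow_mul hu'.le, mul_one_div_cancel hα0.ne', rpow_one]

lemma psi_inj : Set.InjOn (fun t : ℝ => (a * t) ^ (1/α)) (Set.Ioi 0) := by
  have hα0 : (0:ℝ) < α := by linarith
  intro t₁ ht₁ t₂ ht₂ h
  simp only at h
  have h2 : ((a * t₁) ^ (1/α)) ^ α = ((a * t₂) ^ (1/α)) ^ α := by rw [h]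
  rw [← rpow_mul (mul_pos ha ht₁).le, ← rpow_mul (mul_pos ha ht₂).le,
    one_div_mul_cancel hα0.ne', rpow_one, rpow_one] at h2
  exact mul_left_cancel₀ ha.ne' h2

lemma psi_deriv {t : ℝ} (ht : t ∈ Set.Ioi (0:ℝ)) :
    HasDerivWithinAt (fun t : ℝ => (a * t) ^ (1/α))
      (1/α * (a * t) ^ (1/α - 1) * a) (Set.Ioi 0) t := by
  have hat : (0:ℝ) < a * t := mul_pos ha ht
  have h1 : HasDerivAt (fun y : ℝ => y ^ (1/α)) (1/α * (a * t) ^ (1/α - 1)) (a * t) :=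
    Real.hasDerivAt_rpow_const (Or.inl hat.ne')
  have h2 : HasDerivAt (fun t : ℝ => a * t) a t := by
    simpa using (hasDerivAt_id t).const_mul a
  exact (h1.comp t h2).hasDerivWithinAt

end

section
variable {a α lam : ℝ} (ha : 0 < a) (hα : 2 < α) (hlam : 0 < lam)

include ha hα in
lemma pointwise_eq (c : ℕ) {t : ℝ} (ht : t ∈ Set.Ioi (0:ℝ)) :
    |1/α * (a * t) ^ (1/α - 1) * a| •
        ((1 - 1 / (1 + a * ((a * t) ^ (1/α)) ^ (-α)) ^ c) * (2 * Real.pi * lam * (a * t) ^ (1/α)))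
      = (2 * Real.pi * lam / α * a ^ (2/α)) * (t ^ (2/α - 1) * (1 - (t / (1 + t)) ^ c)) := by
  have ht' : (0:ℝ) < t := ht
  have hα0 : (0:ℝ) < α := by linarith
  have hat : (0:ℝ) < a * t := mul_pos ha ht'
  have e1 : ((a * t) ^ (1/α)) ^ (-α) = (a * t)⁻¹ := by
    rw [← rpow_mul hat.le, show (1/α) * (-α) = -1 by field_simp, rpow_neg_one]
  have e2 : a * (a * t)⁻¹ = t⁻¹ := by
    rw [mul_inv]; field_simp
  have e3 : 1 + t⁻¹ = (1 + t)/t := by field_simp; ring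
  have key : 1/α * (a * t) ^ (1/α - 1) * a * (2 * Real.pi * lam * (a * t) ^ (1/α))
      = 2 * Real.pi * lam / α * a ^ (2/α) * t ^ (2/α - 1) := by
    calc 1/α * (a * t) ^ (1/α - 1) * a * (2 * Real.pi * lam * (a * t) ^ (1/α))
        = 1/α * a * (2 * Real.pi * lam) * ((a * t) ^ (1/α - 1) * (a * t) ^ (1/α)) := by ring
      _ = 1/α * a * (2 * Real.pi * lam) * (a * t) ^ (2/α - 1) := by
          rw [← rpow_add hat, show (1/α - 1) + (1/α) = 2/α - 1 by ring]
      _ = 1/α * a * (2 * Real.pi * lam) * (a ^ (2/α - 1) * t ^ (2/α - 1)) := by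
          rw [mul_rpow ha.le ht'.le]
      _ = 2 * Real.pi * lam / α * (a * a ^ (2/α - 1)) * t ^ (2/α - 1) := by ring
      _ = 2 * Real.pi * lam / α * a ^ (2/α) * t ^ (2/α - 1) := by
          rw [show a * a ^ (2/α - 1) = a ^ (2/α) from by
            rw [show (2/α) = 1 + (2/α - 1) by ring, rpow_add ha, rpow_one]; ring_nf]
  rw [smul_eq_mul, abs_of_pos (by positivity), e1, e2, e3, one_div ((((1+t)/t)) ^ c),
    ← inv_pow, inv_div]
  linear_combination (1 - (t / (1 + t)) ^ c) * key

lemma geom_decomp (c : ℕ) {t : ℝ} (ht : 0 < t) (β : ℝ) :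
    t ^ (β - 1) * (1 - (t / (1 + t)) ^ c)
      = ∑ k ∈ Finset.range c, t ^ (β + k - 1) * (1 + t) ^ (-(β + k + (1 - β))) := by
  have h1t : (0:ℝ) < 1 + t := by linarith
  have hterm : ∀ k : ℕ, t ^ (β + (k:ℝ) - 1) * (1 + t) ^ (-(β + k + (1 - β)))
      = t ^ (β - 1) * ((t / (1 + t)) ^ k * (1 + t)⁻¹) := by
    intro k
    rw [show β + (k:ℝ) - 1 = (β - 1) + k by ring, rpow_add ht, rpow_natCast,
      show -(β + (k:ℝ) + (1 - β)) = -((k:ℝ) + 1) by ring, rpow_neg h1t.le,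
      show ((k:ℝ) + 1) = (((k+1 : ℕ)):ℝ) by push_cast; ring, rpow_natCast,
      div_pow, pow_succ, mul_inv, div_eq_mul_inv]
    ring
  simp_rw [hterm]
  rw [← Finset.mul_sum, ← Finset.sum_mul]
  have hxne : t / (1 + t) ≠ 1 := ne_of_lt (by rw [div_lt_one h1t]; linarith)
  rw [geom_sum_eq hxne]
  have h1x : 1 - t / (1 + t) = (1 + t)⁻¹ := by field_simp; ring
  field_simp
  ring

end

/-- For `s > 0`, `P > 0`, `α > 2` and integer `c ≥ 1`:
`∫₀^∞ (1 − 1/(1 + s P u^{−α})^c) · 2πλ u du = πλ (sP)^{2/α} c B(1 − 2/α, c + 2/α)`. -/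
theorem inter_cluster_bound_integral (s P α lam : ℝ) (hs : 0 < s) (hP : 0 < P)
    (hα : 2 < α) (hlam : 0 < lam) (c : ℕ) (hc : 1 ≤ c) :
    ∫ u in Set.Ioi (0 : ℝ),
        (1 - 1 / (1 + s * P * u ^ (-α)) ^ c) * (2 * Real.pi * lam * u) =
      Real.pi * lam * (s * P) ^ (2 / α) * c * eulerBeta (1 - 2 / α) (c + 2 / α) := by
  obtain ⟨m, rfl⟩ : ∃ m, c = m + 1 := ⟨c - 1, (Nat.succ_pred_eq_of_pos hc).symm⟩
  set a : ℝ := s * P with ha_def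
  have ha : 0 < a := mul_pos hs hP
  have hα0 : (0:ℝ) < α := by linarith
  have hq : (0:ℝ) < 1 - 2/α := by
    have : 2/α < 1 := (div_lt_one hα0).mpr hα
    linarith
  have hp0 : (0:ℝ) < 2/α := by positivity
  set c' : ℕ := m + 1 with hc'
  have hpk : ∀ k : ℕ, (0:ℝ) < 2/α + k := fun k => by positivity
  -- change of variables u = (a t) ^ (1/α)
  have step1 : (∫ u in Set.Ioi (0 : ℝ),
        (1 - 1 / (1 + a * u ^ (-α)) ^ c') * (2 * Real.pi * lam * u))
      = ∫ t in Set.Ioi (0 : ℝ),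
          (2 * Real.pi * lam / α * a ^ (2/α)) *
            (t ^ (2/α - 1) * (1 - (t / (1 + t)) ^ c')) := by
    conv_lhs => rw [← psi_image ha hα]
    rw [integral_image_eq_integral_abs_deriv_smul measurableSet_Ioi
        (fun t ht => psi_deriv ha hα ht) (psi_inj ha hα)]
    exact setIntegral_congr_fun measurableSet_Ioi fun t ht => pointwise_eq ha hα c' ht
  rw [step1, MeasureTheory.integral_const_mul]
  -- decompose into sum and integrate term by term
  have step2 : (∫ t in Set.Ioi (0 : ℝ), t ^ (2/α - 1) * (1 - (t / (1 + t)) ^ c'))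
      = ∑ k ∈ Finset.range c',
          Real.Gamma (2/α + k) * Real.Gamma (1 - 2/α) / Real.Gamma (2/α + k + (1 - 2/α)) := by
    rw [setIntegral_congr_fun measurableSet_Ioi
      (fun t ht => geom_decomp c' (Set.mem_Ioi.mp ht) (2/α)),
      MeasureTheory.integral_finset_sum _ (fun k _ =>
        integrableOn_Ioi_rpow_one_add (hpk k) hq
          (realBeta_integrable (2/α + k) (1 - 2/α) (hpk k) hq))]
    exact Finset.sum_congr rfl fun k _ =>
      integral_Ioi_rpow_one_add (hpk k) hq
        (realBeta_integral (2/α + k) (1 - 2/α) (hpk k) hq)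
  rw [step2]
  -- evaluate the sum using the telescoping identity
  have hfact : ∀ k : ℕ, Real.Gamma (2/α + k + (1 - 2/α)) = (Nat.factorial k : ℝ) := by
    intro k
    rw [show 2/α + (k:ℝ) + (1 - 2/α) = (k:ℝ) + 1 by ring, Real.Gamma_nat_eq_factorial]
  have hsum : ∑ k ∈ Finset.range c',
        Real.Gamma (2/α + k) * Real.Gamma (1 - 2/α) / Real.Gamma (2/α + k + (1 - 2/α))
      = (Real.Gamma (1 - 2/α) / (2/α)) * (Real.Gamma (2/α + m + 1) / (Nat.factorial m : ℝ)) := by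
    rw [← gamma_telescope (2/α) hp0 m, Finset.mul_sum]
    refine Finset.sum_congr rfl fun k _ => ?_
    rw [hfact k]
    have : (Nat.factorial k : ℝ) ≠ 0 := by positivity
    field_simp
  rw [hsum, eulerBeta]
  have hG1 : Real.Gamma ((1 - 2/α) + ((c' : ℝ) + 2/α)) = (Nat.factorial (m + 1) : ℝ) := by
    rw [show (1 - 2/α) + ((c' : ℝ) + 2/α) = ((m:ℝ) + 1) + 1 by push_cast [hc']; ring,
      show ((m:ℝ) + 1) + 1 = (((m + 1 : ℕ)):ℝ) + 1 by push_cast; ring,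
      Real.Gamma_nat_eq_factorial]
  rw [hG1, show ((c' : ℝ) + 2/α) = 2/α + (m:ℝ) + 1 by push_cast [hc']; ring]
  have hm : (Nat.factorial m : ℝ) ≠ 0 := by positivity
  have hm1 : (Nat.factorial (m + 1) : ℝ) ≠ 0 := by positivity
  rw [Nat.factorial_succ]
  push_cast [hc']
  field_simp
end

section
/- For s > 0, P > 0, α > 2, and 0 < r̂ < R, the integral ∫_{r̂}^R (1/(1 + s P u^{−α})) · (2u/(R² − r̂²)) du equals [R^{2+α} ₂F₁(1, 1+2/α, 2+2/α, −R^α/(sP)) − r̂^{2+α} ₂F₁(1, 1+2/α, 2+2/α, −r̂^α/(sP))] / (sP(α+2)(R² − r̂²)/2). -/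
open MeasureTheory Real

/-- Gauss hypergeometric function `₂F₁(a,b,c,z)` via the Euler integral representation
`Γ(c)/(Γ(b)Γ(c−b)) ∫₀¹ t^{b−1}(1−t)^{c−b−1}(1−zt)^{−a} dt`, which provides the analytic
continuation to real `z < 1` (in particular to negative real arguments). -/
noncomputable def gaussHyp (a b c z : ℝ) : ℝ :=
  Real.Gamma c / (Real.Gamma b * Real.Gamma (c - b)) *
    ∫ t in (0 : ℝ)..1, t ^ (b - 1) * (1 - t) ^ (c - b - 1) * (1 - z * t) ^ (-a)

private lemma cont_rpow_pos {p : ℝ} (hp : 0 < p) : Continuous (fun x : ℝ => x ^ p) := by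
  rw [continuous_iff_continuousAt]
  exact fun x => Real.continuousAt_rpow_const x p (Or.inr hp.le)

private lemma key_sub (s P α r : ℝ) (hs : 0 < s) (hP : 0 < P) (hα : 2 < α) (hr : 0 < r) :
    r ^ (2 + α) * gaussHyp 1 (1 + 2 / α) (2 + 2 / α) (-(r ^ α / (s * P))) =
      s * P * (α + 2) * ∫ u in (0:ℝ)..r, u ^ (α + 1) / (s * P + u ^ α) := by
  have hα0 : (0:ℝ) < α := by linarith
  have hsP : (0:ℝ) < s * P := mul_pos hs hP
  have hrα : (0:ℝ) < r ^ α := rpow_pos_of_pos hr α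
  have hr2 : (0:ℝ) < r ^ (2:ℝ) := rpow_pos_of_pos hr 2
  have hb : (0:ℝ) < 1 + 2 / α := by positivity
  set F : ℝ → ℝ := fun t => t ^ (2 / α) * (1 + r ^ α / (s * P) * t)⁻¹ with hF
  -- Step 1: simplify gaussHyp to (1+2/α) * ∫ t in 0..1, F t
  have hgauss : gaussHyp 1 (1 + 2 / α) (2 + 2 / α) (-(r ^ α / (s * P))) =
      (1 + 2 / α) * ∫ t in (0:ℝ)..1, F t := by
    rw [gaussHyp]
    have h1 : (2:ℝ) + 2 / α = (1 + 2 / α) + 1 := by ring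
    rw [h1, Real.Gamma_add_one hb.ne']
    have h3 : ∀ t ∈ Set.uIcc (0:ℝ) 1,
        t ^ ((1 + 2 / α) - 1) * (1 - t) ^ ((1 + 2/α) + 1 - (1 + 2 / α) - 1)
        * (1 - (-(r ^ α / (s * P))) * t) ^ (-(1:ℝ)) = F t := by
      intro t _
      have e1 : (1:ℝ) + 2 / α - 1 = 2 / α := by ring
      have e2 : (1:ℝ) + 2/α + 1 - (1 + 2 / α) - 1 = 0 := by ring
      have e3 : 1 - (-(r ^ α / (s * P))) * t = 1 + r ^ α / (s * P) * t := by ring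
      rw [e1, e2, e3, Real.rpow_zero, Real.rpow_neg_one, hF]
      ring
    rw [intervalIntegral.integral_congr h3]
    have e4 : ((1:ℝ) + 2 / α) + 1 - (1 + 2 / α) = 1 := by ring
    rw [e4, Real.Gamma_one]
    have hg : Real.Gamma (1 + 2/α) ≠ 0 := (Real.Gamma_pos_of_pos hb).ne'
    field_simp
  -- Step 2: change of variables t = u^α / r^α
  set f : ℝ → ℝ := fun u => u ^ α / r ^ α with hf
  set f' : ℝ → ℝ := fun u => α * u ^ (α - 1) / r ^ α with hf'
  have hsubst : (∫ u in (0:ℝ)..r, f' u • F (f u)) = ∫ t in (0:ℝ)..1, F t := by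
    have h0' : f 0 = 0 := by simp [hf, Real.zero_rpow hα0.ne']
    have h1' : f r = 1 := by simp [hf, div_self hrα.ne']
    have hcf : ContinuousOn F (f '' Set.uIcc 0 r) := by
      have himg : f '' Set.uIcc 0 r ⊆ Set.Icc 0 1 := by
        rintro x ⟨u, hu, rfl⟩
        rw [Set.uIcc_of_le hr.le] at hu
        refine ⟨by exact div_nonneg (Real.rpow_nonneg hu.1 α) hrα.le, ?_⟩
        simp only [hf]
        rw [div_le_one hrα]
        exact Real.rpow_le_rpow hu.1 hu.2 hα0.le
      refine ContinuousOn.mono ?_ himg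
      refine ContinuousOn.mul (cont_rpow_pos (by positivity)).continuousOn ?_
      refine ContinuousOn.inv₀ (by fun_prop) ?_
      intro t ht
      have h1t : 0 ≤ r ^ α / (s * P) * t := by
        have := ht.1; positivity
      positivity
    have := intervalIntegral.integral_comp_smul_deriv'
      (a := 0) (b := r) (f := f) (f' := f') (g := F)
      (fun x _ => by
        simpa [hf', mul_div_assoc] using
          (Real.hasDerivAt_rpow_const (x := x) (p := α) (Or.inr (by linarith))).div_const
          (r ^ α))
      ((continuous_const.mul (cont_rpow_pos (p := α - 1) (by linarith))).div_const
        (r ^ α)).continuousOn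
      hcf
    rw [h0', h1'] at this
    simpa [Function.comp] using this
  -- Step 3: pointwise integrand identity on [0, r]
  have hpt : ∀ u ∈ Set.uIcc (0:ℝ) r, f' u • F (f u) =
      (α * (s * P) / r ^ (2 + α)) * (u ^ (α + 1) / (s * P + u ^ α)) := by
    intro u hu
    rw [Set.uIcc_of_le hr.le] at hu
    rcases eq_or_lt_of_le hu.1 with h | h
    · rw [← h]
      simp [hf', hF, hf, Real.zero_rpow (by intro hc; nlinarith : α - 1 ≠ 0),
        Real.zero_rpow (by intro hc; nlinarith : α + 1 ≠ 0)]
    · have huα : (0:ℝ) < u ^ α := rpow_pos_of_pos h α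
      have hsum : (0:ℝ) < s * P + u ^ α := by positivity
      have e1 : (u ^ α / r ^ α) ^ (2/α) = u ^ (2:ℝ) / r ^ (2:ℝ) := by
        rw [Real.div_rpow (le_of_lt huα) (le_of_lt hrα), ← Real.rpow_mul h.le,
          ← Real.rpow_mul hr.le]
        congr 1 <;> field_simp
      have e2 : r ^ α / (s * P) * (u ^ α / r ^ α) = u ^ α / (s * P) := by
        field_simp
      have e3 : u ^ (α + 1) = u ^ (α - 1) * u ^ (2:ℝ) := by
        rw [← Real.rpow_add h]; congr 1; ring
      have e4 : r ^ (2 + α) = r ^ (2:ℝ) * r ^ α := Real.rpow_add hr 2 α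
      have e5 : (1 + u ^ α / (s * P)) ≠ 0 := by positivity
      simp only [hf', hF, hf, smul_eq_mul]
      rw [e1, e2, e3, e4]
      field_simp
  rw [hgauss, ← hsubst, intervalIntegral.integral_congr hpt,
    intervalIntegral.integral_const_mul]
  have hr2α : (0:ℝ) < r ^ (2 + α) := rpow_pos_of_pos hr _
  field_simp

/-- Closed form of the single-interferer factor of the intra-cluster interference
Laplace transform with perfect SIC: for `s > 0`, `P > 0`, `α > 2`, `0 < r̂ < R`,
`∫_{r̂}^R (1/(1 + s P u^{−α})) (2u/(R² − r̂²)) du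
 = [R^{2+α} ₂F₁(1,1+2/α,2+2/α,−R^α/(sP)) − r̂^{2+α} ₂F₁(1,1+2/α,2+2/α,−r̂^α/(sP))]
   / (s P (α+2)(R² − r̂²)/2)`. -/
theorem laplace_factor_closed_form (s P α R rhat : ℝ) (hs : 0 < s) (hP : 0 < P)
    (hα : 2 < α) (h0 : 0 < rhat) (hrR : rhat < R) :
    ∫ u in rhat..R, (1 / (1 + s * P * u ^ (-α))) * (2 * u / (R ^ 2 - rhat ^ 2)) =
      (R ^ (2 + α) * gaussHyp 1 (1 + 2 / α) (2 + 2 / α) (-(R ^ α / (s * P))) -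
          rhat ^ (2 + α) * gaussHyp 1 (1 + 2 / α) (2 + 2 / α) (-(rhat ^ α / (s * P)))) /
        (s * P * (α + 2) * (R ^ 2 - rhat ^ 2) / 2) := by
  have hR : (0:ℝ) < R := lt_trans h0 hrR
  have hsP : (0:ℝ) < s * P := mul_pos hs hP
  have hα0 : (0:ℝ) < α := by linarith
  have hD : (0:ℝ) < R ^ 2 - rhat ^ 2 := by nlinarith
  set h : ℝ → ℝ := fun u => u ^ (α + 1) / (s * P + u ^ α) with hh
  -- continuity / integrability of h on [0, R]
  have hcont : ContinuousOn h (Set.Icc 0 R) := by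
    refine ContinuousOn.div (cont_rpow_pos (by linarith)).continuousOn
      (continuous_const.add (cont_rpow_pos hα0)).continuousOn ?_
    intro x hx
    have : (0:ℝ) ≤ x ^ α := Real.rpow_nonneg hx.1 α
    positivity
  have hi1 : IntervalIntegrable h volume 0 R :=
    (hcont.mono (by rw [Set.uIcc_of_le hR.le])).intervalIntegrable
  have hi2 : IntervalIntegrable h volume 0 rhat :=
    ((hcont.mono (Set.Icc_subset_Icc le_rfl (le_of_lt hrR))).mono
      (by rw [Set.uIcc_of_le h0.le])).intervalIntegrable
  -- split the integral
  have hsplit : (∫ u in (0:ℝ)..R, h u) - (∫ u in (0:ℝ)..rhat, h u) = ∫ u in rhat..R, h u :=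
    intervalIntegral.integral_interval_sub_left hi1 hi2
  -- pointwise form of the LHS integrand
  have hpt : ∀ u ∈ Set.uIcc rhat R,
      (1 / (1 + s * P * u ^ (-α))) * (2 * u / (R ^ 2 - rhat ^ 2)) =
        (2 / (R ^ 2 - rhat ^ 2)) * h u := by
    intro u hu
    rw [Set.uIcc_of_le hrR.le] at hu
    have hu0 : (0:ℝ) < u := lt_of_lt_of_le h0 hu.1
    have huα : (0:ℝ) < u ^ α := rpow_pos_of_pos hu0 α
    have e1 : u ^ (-α) = (u ^ α)⁻¹ := Real.rpow_neg hu0.le α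
    have e2 : u ^ (α + 1) = u ^ α * u := by
      rw [Real.rpow_add hu0, Real.rpow_one]
    have e3 : (0:ℝ) < s * P + u ^ α := by positivity
    rw [e1, hh]
    simp only
    rw [e2]
    field_simp
    ring
  rw [intervalIntegral.integral_congr hpt, intervalIntegral.integral_const_mul, ← hsplit,
    key_sub s P α R hs hP hα hR, key_sub s P α rhat hs hP hα h0]
  have hα2 : (0:ℝ) < α + 2 := by linarith
  field_simp
  ring
end

section
/- The McLaurin series arcsin(z) = Σ_{k=0}^∞ Γ(k + 1/2)/(√π (2k+1) k!) · z^{2k+1} holds for |z| ≤ 1. -/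
set_option maxHeartbeats 1000000

noncomputable def cb (k : ℕ) : ℝ := (Nat.choose (2*k) k : ℝ) / 4^k

lemma cb_zero : cb 0 = 1 := by simp [cb]

lemma cb_nonneg (k : ℕ) : 0 ≤ cb k :=
  div_nonneg (Nat.cast_nonneg _) (by positivity)

lemma cb_succ (k : ℕ) : cb (k+1) * (2*k+2) = cb k * (2*k+1) := by
  have h := Nat.succ_mul_centralBinom_succ k
  have h' : ((k+1) * Nat.centralBinom (k+1) : ℝ) = 2 * (2*k+1) * Nat.centralBinom k := by
    exact_mod_cast congrArg (Nat.cast (R := ℝ)) h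
  simp only [Nat.centralBinom] at h'
  simp only [cb]
  have h4 : (4:ℝ)^(k+1) = 4^k * 4 := by ring
  field_simp [h4]
  push_cast
  linear_combination (2 * (4:ℝ)^k) * h'

lemma cb_le_one (k : ℕ) : cb k ≤ 1 := by
  induction k with
  | zero => simp [cb]
  | succ n ih =>
    have h := cb_succ n
    have h2 : (0:ℝ) < 2*n+2 := by positivity
    nlinarith [cb_nonneg n]

lemma Gamma_half_eq (k : ℕ) :
    Real.Gamma (k + 1/2) = Real.sqrt Real.pi * cb k * k.factorial := by
  induction k with
  | zero =>
    rw [show ((0:ℕ):ℝ) + 1/2 = 1/2 by norm_num, Real.Gamma_one_half_eq, cb_zero]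
    simp
  | succ n ih =>
    have : ((n:ℝ)+1) + 1/2 = ((n:ℝ) + 1/2) + 1 := by ring
    push_cast
    rw [this, Real.Gamma_add_one (by positivity), ih]
    have h := cb_succ n
    have hfac : ((n+1).factorial : ℝ) = (n+1) * n.factorial := by
      push_cast [Nat.factorial_succ]; ring
    push_cast [hfac]
    linear_combination (-(Real.sqrt Real.pi * (n.factorial:ℝ)) / 2) * h

lemma coeff_eq (k : ℕ) :
    Real.Gamma (k + 1/2) / (Real.sqrt Real.pi * (2*k+1) * k.factorial)
      = cb k / (2*k+1) := by
  rw [Gamma_half_eq]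
  have h1 : Real.sqrt Real.pi ≠ 0 := by positivity
  have h2 : ((k.factorial : ℝ)) ≠ 0 := by exact_mod_cast (Nat.factorial_pos k).ne'
  have h3 : (2*(k:ℝ)+1) ≠ 0 := by positivity
  field_simp

lemma sq_abs_lt {x : ℝ} (h : |x| < 1) : x^2 < 1 := by
  nlinarith [abs_nonneg x, sq_abs x]

lemma norm_cb_pow {x : ℝ} (k : ℕ) : ‖cb k * x^(2*k)‖ ≤ (x^2)^k := by
  rw [norm_mul, Real.norm_eq_abs, Real.norm_eq_abs, abs_of_nonneg (cb_nonneg k),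
    abs_pow, pow_mul, sq_abs]
  exact mul_le_of_le_one_left (by positivity) (cb_le_one k)

lemma summable_S {x : ℝ} (h : |x| < 1) : Summable fun k : ℕ => cb k * x^(2*k) :=
  Summable.of_norm <| Summable.of_nonneg_of_le (fun k => norm_nonneg _)
    (fun k => norm_cb_pow k)
    (summable_geometric_of_lt_one (by positivity) (sq_abs_lt h))

lemma cb_div_le_one (k : ℕ) : cb k / (2*(k:ℝ)+1) ≤ 1 := by
  apply div_le_one_of_le₀ ?_ (by positivity)
  have : (0:ℝ) ≤ (k:ℝ) := Nat.cast_nonneg k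
  linarith [cb_le_one k]

lemma norm_G_term {x : ℝ} (h : |x| ≤ 1) (k : ℕ) :
    ‖cb k / (2*(k:ℝ)+1) * x^(2*k+1)‖ ≤ (x^2)^k := by
  have e : ‖cb k / (2*(k:ℝ)+1) * x^(2*k+1)‖ = cb k/(2*(k:ℝ)+1) * (x^2)^k * |x| := by
    rw [norm_mul, Real.norm_eq_abs, Real.norm_eq_abs, abs_pow, pow_succ, pow_mul, sq_abs,
      abs_div, abs_of_nonneg (cb_nonneg k), abs_of_nonneg (by positivity : (0:ℝ) ≤ 2*(k:ℝ)+1),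
      mul_assoc]
  rw [e]
  calc cb k/(2*(k:ℝ)+1) * (x^2)^k * |x| ≤ cb k/(2*(k:ℝ)+1) * (x^2)^k :=
        mul_le_of_le_one_right (mul_nonneg (div_nonneg (cb_nonneg k) (by positivity)) (by positivity)) h
    _ ≤ (x^2)^k := mul_le_of_le_one_left (by positivity) (cb_div_le_one k)

lemma summable_G {x : ℝ} (h : |x| < 1) :
    Summable fun k : ℕ => cb k / (2*(k:ℝ)+1) * x^(2*k+1) :=
  Summable.of_norm <| Summable.of_nonneg_of_le (fun k => norm_nonneg _)
    (fun k => norm_G_term h.le k)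
    (summable_geometric_of_lt_one (by positivity) (sq_abs_lt h))

-- summable bound for derivative-of-S series
lemma summable_u {r : ℝ} (h0 : 0 ≤ r) (h : r < 1) :
    Summable fun k : ℕ => 2*(k:ℝ)*r^(2*k-1) := by
  apply Summable.of_nonneg_of_le (fun k => by positivity) (fun k => ?_)
    ((summable_pow_mul_geometric_of_norm_lt_one (R := ℝ) 1
      (by rwa [Real.norm_eq_abs, abs_of_nonneg h0])).mul_left 2)
  simp only [pow_one]
  cases k with
  | zero => simp
  | succ n =>
    have : r^(2*(n+1)-1) ≤ r^(n+1) :=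
      pow_le_pow_of_le_one h0 h.le (by omega)
    calc 2*((n+1:ℕ):ℝ)*r^(2*(n+1)-1) ≤ 2*((n+1:ℕ):ℝ)*r^(n+1) := by
          apply mul_le_mul_of_nonneg_left this (by positivity)
      _ = 2*(((n+1:ℕ):ℝ)*r^(n+1)) := by ring

noncomputable def Sf (x : ℝ) : ℝ := ∑' k : ℕ, cb k * x^(2*k)
noncomputable def Tf (x : ℝ) : ℝ := ∑' k : ℕ, cb k * (((2*k : ℕ) : ℝ) * x^(2*k-1))
noncomputable def Gf (x : ℝ) : ℝ := ∑' k : ℕ, cb k / (2*(k:ℝ)+1) * x^(2*k+1)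

lemma norm_T_term {x r : ℝ} (h : |x| ≤ r) (k : ℕ) :
    ‖cb k * (((2*k : ℕ) : ℝ) * x^(2*k-1))‖ ≤ 2*(k:ℝ)*r^(2*k-1) := by
  have hr : 0 ≤ r := (abs_nonneg x).trans h
  rw [norm_mul, norm_mul, Real.norm_eq_abs, Real.norm_eq_abs, Real.norm_eq_abs,
    abs_of_nonneg (cb_nonneg k), abs_pow, abs_of_nonneg (by positivity : (0:ℝ) ≤ ((2*k:ℕ):ℝ))]
  push_cast
  calc cb k * (2*(k:ℝ) * |x|^(2*k-1)) ≤ 1 * (2*(k:ℝ) * r^(2*k-1)) := by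
        apply mul_le_mul (cb_le_one k) ?_ (by positivity) one_pos.le
        exact mul_le_mul_of_nonneg_left (pow_le_pow_left₀ (abs_nonneg x) h _) (by positivity)
    _ = 2*(k:ℝ)*r^(2*k-1) := one_mul _

lemma summable_T {x : ℝ} (h : |x| < 1) :
    Summable fun k : ℕ => cb k * (((2*k : ℕ) : ℝ) * x^(2*k-1)) :=
  Summable.of_norm <| Summable.of_nonneg_of_le (fun k => norm_nonneg _)
    (fun k => norm_T_term le_rfl k) (summable_u (abs_nonneg x) h)

lemma summable_A {x : ℝ} (h : |x| < 1) :
    Summable fun k : ℕ => cb k * (2*(k:ℝ)) * x^(2*k+1) := by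
  apply Summable.of_norm
  apply Summable.of_nonneg_of_le (fun k => norm_nonneg _) (fun k => ?_)
    ((summable_pow_mul_geometric_of_norm_lt_one (R := ℝ) 1
      (by rw [Real.norm_eq_abs, abs_of_nonneg (by positivity : (0:ℝ) ≤ x^2)]
          exact sq_abs_lt h)).mul_left 2)
  simp only [pow_one]
  have : ‖cb k * (2*(k:ℝ)) * x^(2*k+1)‖ = cb k * (2*(k:ℝ)) * ((x^2)^k * |x|) := by
    rw [norm_mul, norm_mul, Real.norm_eq_abs, Real.norm_eq_abs, Real.norm_eq_abs,
      abs_of_nonneg (cb_nonneg k), abs_of_nonneg (by positivity : (0:ℝ) ≤ 2*(k:ℝ)),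
      abs_pow, pow_succ, pow_mul, sq_abs]
  rw [this]
  calc cb k * (2*(k:ℝ)) * ((x^2)^k * |x|)
      ≤ 1 * (2*(k:ℝ)) * ((x^2)^k * 1) := by
        apply mul_le_mul
        · exact mul_le_mul_of_nonneg_right (cb_le_one k) (by positivity)
        · exact mul_le_mul_of_nonneg_left h.le (by positivity)
        · positivity
        · positivity
    _ = 2*((k:ℝ)*(x^2)^k) := by ring

lemma summable_B {x : ℝ} (h : |x| < 1) :
    Summable fun k : ℕ => cb k * x^(2*k+1) := by
  have := (summable_S h).mul_right x
  refine this.congr (fun k => ?_)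
  rw [pow_succ, mul_assoc]

lemma key_identity {x : ℝ} (hx : |x| < 1) : (1 - x^2) * Tf x = x * Sf x := by
  have hA := summable_A hx
  have hB := summable_B hx
  have hT := summable_T hx
  have hS := summable_S hx
  -- Tf x = ∑' k, (A k + B k) where shifted
  have shift : Tf x = ∑' k : ℕ, (cb k * (2*(k:ℝ)) * x^(2*k+1) + cb k * x^(2*k+1)) := by
    rw [Tf, hT.tsum_eq_zero_add]
    have h0 : cb 0 * (((2*0 : ℕ) : ℝ) * x^(2*0-1)) = 0 := by norm_num
    rw [h0, zero_add]
    apply tsum_congr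
    intro k
    have e1 : 2*(k+1) - 1 = 2*k+1 := by omega
    have e2 : ((2*(k+1) : ℕ) : ℝ) = 2*(k:ℝ)+2 := by push_cast; ring
    rw [e1, e2]
    linear_combination x^(2*k+1) * (cb_succ k)
  have x2T : x^2 * Tf x = ∑' k : ℕ, cb k * (2*(k:ℝ)) * x^(2*k+1) := by
    rw [Tf, ← tsum_mul_left]
    apply tsum_congr
    intro k
    cases k with
    | zero => norm_num
    | succ n =>
      have e1 : 2*(n+1) - 1 = 2*n+1 := by omega
      push_cast [e1]
      ring
  have xS : x * Sf x = ∑' k : ℕ, cb k * x^(2*k+1) := by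
    rw [Sf, ← tsum_mul_left]
    apply tsum_congr
    intro k
    rw [pow_succ]
    ring
  have expand : (1 - x^2) * Tf x = Tf x - x^2 * Tf x := by ring
  rw [expand, x2T, shift, xS, hA.tsum_add hB]
  ring

open Set in
lemma const_of_hasDerivAt_zero {s : Set ℝ} (hs : Convex ℝ s) (ho : IsOpen s) {f : ℝ → ℝ}
    (hf : ∀ x ∈ s, HasDerivAt f 0 x) {a b : ℝ} (ha : a ∈ s) (hb : b ∈ s) : f a = f b := by
  apply hs.is_const_of_fderivWithin_eq_zero
    (fun x hx => (hf x hx).differentiableAt.differentiableWithinAt) ?_ ha hb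
  intro x hx
  rw [fderivWithin_of_isOpen ho hx, (hf x hx).hasFDerivAt.fderiv]
  ext y
  simp

open Set in
lemma hasDerivAt_Sf {r x : ℝ} (hr0 : 0 < r) (hr1 : r < 1) (hx : x ∈ Ioo (-r) r) :
    HasDerivAt Sf (Tf x) x := by
  have habs : ∀ y : ℝ, y ∈ Ioo (-r) r → |y| ≤ r := by
    intro y hy; rw [abs_le]; exact ⟨hy.1.le, hy.2.le⟩
  exact hasDerivAt_tsum_of_isPreconnected
    (g := fun k y => cb k * y^(2*k)) (g' := fun k y => cb k * (((2*k : ℕ) : ℝ) * y^(2*k-1)))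
    (summable_u hr0.le hr1) isOpen_Ioo
    (convex_Ioo _ _).isPreconnected
    (fun k y _ => (hasDerivAt_pow (2*k) y).const_mul (cb k))
    (fun k y hy => norm_T_term (habs y hy) k)
    (mem_Ioo.2 ⟨by linarith, hr0⟩)
    (summable_S (by simp : |(0:ℝ)| < 1)) hx

open Set in
lemma hasDerivAt_Gf {r x : ℝ} (hr0 : 0 < r) (hr1 : r < 1) (hx : x ∈ Ioo (-r) r) :
    HasDerivAt Gf (Sf x) x := by
  have habs : ∀ y : ℝ, y ∈ Ioo (-r) r → |y| ≤ r := by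
    intro y hy; rw [abs_le]; exact ⟨hy.1.le, hy.2.le⟩
  exact hasDerivAt_tsum_of_isPreconnected
    (g := fun k y => cb k / (2*(k:ℝ)+1) * y^(2*k+1)) (g' := fun k y => cb k * y^(2*k))
    (summable_geometric_of_lt_one (by positivity)
      (by nlinarith : r^2 < 1)) isOpen_Ioo
    (convex_Ioo _ _).isPreconnected
    (fun k y _ => by
      have h := (hasDerivAt_pow (2*k+1) y).const_mul (cb k / (2*(k:ℝ)+1))
      refine (h.congr_deriv ?_); symm
      have : (2*k+1) - 1 = 2*k := by omega
      rw [this]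
      push_cast
      field_simp)
    (fun k y hy => by
      calc ‖cb k * y^(2*k)‖ ≤ (y^2)^k := norm_cb_pow k
        _ ≤ (r^2)^k := by
            apply pow_le_pow_left₀ (by positivity)
            nlinarith [habs y hy, abs_nonneg y, sq_abs y])
    (mem_Ioo.2 ⟨by linarith, hr0⟩)
    (summable_G (by simp : |(0:ℝ)| < 1)) hx

lemma Sf_zero : Sf 0 = 1 := by
  rw [Sf, tsum_eq_single 0 (fun k hk => by
    have : 2*k ≠ 0 := by omega
    simp [zero_pow this])]
  simp [cb_zero]

lemma Gf_zero : (∑' k : ℕ, cb k / (2*(k:ℝ)+1) * (0:ℝ)^(2*k+1)) = 0 := by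
  convert tsum_zero with k
  simp

open Set in
lemma Sf_sqrt {x : ℝ} (hx : |x| < 1) : Real.sqrt (1-x^2) * Sf x = 1 := by
  set r := (|x|+1)/2 with hr
  have hxa := abs_nonneg x
  have hr0 : 0 < r := by rw [hr]; linarith
  have hr1 : r < 1 := by rw [hr]; linarith
  have hxr : x ∈ Ioo (-r) r := by
    rw [mem_Ioo, ← abs_lt, hr]; linarith
  have hzero : (0:ℝ) ∈ Ioo (-r) r := mem_Ioo.2 ⟨by linarith, hr0⟩
  have key : ∀ y ∈ Ioo (-r) r, HasDerivAt (fun y => Real.sqrt (1-y^2) * Sf y) 0 y := by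
    intro y hy
    have hy1 : |y| < 1 := by
      rw [abs_lt]; exact ⟨by linarith [hy.1], by linarith [hy.2]⟩
    have hs2 : (0:ℝ) < 1 - y^2 := by nlinarith [sq_abs y, abs_nonneg y]
    have inner : HasDerivAt (fun t : ℝ => 1 - t^2) (-(2*y)) y := by
      have := (hasDerivAt_pow 2 y).const_sub 1
      simpa using this
    have hsq := (Real.hasDerivAt_sqrt hs2.ne').comp y inner
    have hmul := hsq.mul (hasDerivAt_Sf hr0 hr1 hy)
    refine (hmul.congr_deriv ?_); symm
    have s_pos : 0 < Real.sqrt (1-y^2) := Real.sqrt_pos.2 hs2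
    have hsq2 : Real.sqrt (1-y^2)^2 = 1-y^2 := Real.sq_sqrt hs2.le
    have hk := key_identity hy1
    simp only [Function.comp_apply]
    field_simp
    linear_combination -hk - (Tf y)*hsq2
  have hconst := const_of_hasDerivAt_zero (convex_Ioo _ _) isOpen_Ioo key hxr hzero
  simp only [Sf_zero] at hconst
  simpa using hconst

open Set in
lemma Gf_eq_arcsin {x : ℝ} (hx : |x| < 1) :
    (∑' k : ℕ, cb k / (2*(k:ℝ)+1) * x^(2*k+1)) = Real.arcsin x := by
  set r := (|x|+1)/2 with hr
  have hxa := abs_nonneg x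
  have hr0 : 0 < r := by rw [hr]; linarith
  have hr1 : r < 1 := by rw [hr]; linarith
  have hxr : x ∈ Ioo (-r) r := by
    rw [mem_Ioo, ← abs_lt, hr]; linarith
  have hzero : (0:ℝ) ∈ Ioo (-r) r := mem_Ioo.2 ⟨by linarith, hr0⟩
  have key : ∀ y ∈ Ioo (-r) r, HasDerivAt (fun y => Gf y - Real.arcsin y) 0 y := by
    intro y hy
    have hy1 : |y| < 1 := by
      rw [abs_lt]; exact ⟨by linarith [hy.1], by linarith [hy.2]⟩
    have hy1' : y ≠ 1 := by intro h; rw [h] at hy1; simp at hy1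
    have hym1 : y ≠ -1 := by intro h; rw [h] at hy1; simp at hy1
    have hs2 : (0:ℝ) < 1 - y^2 := by nlinarith [sq_abs y, abs_nonneg y]
    have s_pos : 0 < Real.sqrt (1-y^2) := Real.sqrt_pos.2 hs2
    have hG := hasDerivAt_Gf hr0 hr1 hy
    have hA := Real.hasDerivAt_arcsin hym1 hy1'
    have hSf : Sf y = 1 / Real.sqrt (1-y^2) := by
      have h2 := Sf_sqrt hy1
      field_simp
      linear_combination h2
    have hsub := hG.sub hA
    rw [hSf] at hsub
    rw [sub_self] at hsub
    exact hsub
  have hconst := const_of_hasDerivAt_zero (convex_Ioo _ _) isOpen_Ioo key hxr hzero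
  have : Gf x - Real.arcsin x = 0 := by
    rw [hconst]
    show Gf 0 - Real.arcsin 0 = 0
    rw [Real.arcsin_zero, Gf, Gf_zero]
    ring
  have h2 : Gf x = Real.arcsin x := by linarith [this]
  rw [← h2, Gf]


open Finset Filter Topology in
lemma partial_le (n : ℕ) :
    ∑ k ∈ Finset.range n, cb k/(2*(k:ℝ)+1) ≤ Real.pi/2 := by
  have cont : Tendsto (fun x : ℝ => ∑ k ∈ Finset.range n, cb k/(2*(k:ℝ)+1) * x^(2*k+1))
      (𝓝[<] (1:ℝ)) (𝓝 (∑ k ∈ Finset.range n, cb k/(2*(k:ℝ)+1) * 1^(2*k+1))) := by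
    apply Tendsto.mono_left ?_ nhdsWithin_le_nhds
    exact (Continuous.tendsto (by continuity) 1)
  simp only [one_pow, mul_one] at cont
  apply le_of_tendsto cont
  filter_upwards [Ioo_mem_nhdsLT_of_mem (by norm_num : (1:ℝ) ∈ Set.Ioc 0 1)] with x hx
  have hx0 : 0 < x := hx.1
  have hx1 : |x| < 1 := by rw [abs_of_pos hx0]; exact hx.2
  calc ∑ k ∈ Finset.range n, cb k/(2*(k:ℝ)+1) * x^(2*k+1)
      ≤ ∑' k : ℕ, cb k/(2*(k:ℝ)+1) * x^(2*k+1) := by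
        apply (summable_G hx1).sum_le_tsum _ (fun k _ => ?_)
        have := cb_nonneg k
        positivity
    _ = Real.arcsin x := Gf_eq_arcsin hx1
    _ ≤ Real.pi/2 := Real.arcsin_le_pi_div_two x

lemma summable_b : Summable (fun k : ℕ => cb k/(2*(k:ℝ)+1)) :=
  summable_of_sum_range_le (fun k => by have := cb_nonneg k; positivity) partial_le

lemma tsum_b_le : ∑' k : ℕ, cb k/(2*(k:ℝ)+1) ≤ Real.pi/2 :=
  Real.tsum_le_of_sum_range_le (fun k => by have := cb_nonneg k; positivity) partial_le

open Filter Topology in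
lemma tsum_b : ∑' k : ℕ, cb k/(2*(k:ℝ)+1) = Real.pi/2 := by
  refine le_antisymm tsum_b_le ?_
  have lim : Tendsto Real.arcsin (𝓝[<] (1:ℝ)) (𝓝 (Real.pi/2)) := by
    have := Real.continuous_arcsin.tendsto 1
    rw [Real.arcsin_one] at this
    exact this.mono_left nhdsWithin_le_nhds
  apply le_of_tendsto lim
  filter_upwards [Ioo_mem_nhdsLT_of_mem (by norm_num : (1:ℝ) ∈ Set.Ioc 0 1)] with x hx
  have hx0 : 0 < x := hx.1
  have hx1 : |x| < 1 := by rw [abs_of_pos hx0]; exact hx.2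
  calc Real.arcsin x = ∑' k : ℕ, cb k/(2*(k:ℝ)+1) * x^(2*k+1) := (Gf_eq_arcsin hx1).symm
    _ ≤ ∑' k : ℕ, cb k/(2*(k:ℝ)+1) := by
        apply (summable_G hx1).tsum_le_tsum (fun k => ?_) summable_b
        have h1 : x^(2*k+1) ≤ 1 := pow_le_one₀ hx0.le hx.2.le
        have h2 : (0:ℝ) ≤ cb k/(2*(k:ℝ)+1) := by have := cb_nonneg k; positivity
        calc cb k/(2*(k:ℝ)+1) * x^(2*k+1) ≤ cb k/(2*(k:ℝ)+1) * 1 :=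
              mul_le_mul_of_nonneg_left h1 h2
          _ = cb k/(2*(k:ℝ)+1) := mul_one _

theorem arcsin_maclaurin' (z : ℝ) (hz : |z| ≤ 1) :
    Real.arcsin z = ∑' k : ℕ, cb k/(2*(k:ℝ)+1) * z^(2*k+1) := by
  rcases lt_or_eq_of_le hz with h | h
  · exact (Gf_eq_arcsin h).symm
  · rcases (abs_eq (by norm_num : (0:ℝ) ≤ 1)).mp h with h1 | h1
    · subst h1
      simp only [one_pow, mul_one]
      rw [Real.arcsin_one, tsum_b]
    · subst h1
      have : ∀ k : ℕ, ((-1:ℝ))^(2*k+1) = -1 := fun k => Odd.neg_one_pow ⟨k, by ring⟩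
      simp only [this]
      rw [Real.arcsin_neg_one]
      have : (∑' k : ℕ, cb k/(2*(k:ℝ)+1) * (-1)) = (∑' k : ℕ, cb k/(2*(k:ℝ)+1)) * (-1) :=
        tsum_mul_right
      rw [this, tsum_b]
      ring

/-- McLaurin series of `arcsin`:
`arcsin z = Σ_{k=0}^∞ Γ(k + 1/2)/(√π (2k+1) k!) · z^{2k+1}` for `|z| ≤ 1`. -/
theorem arcsin_maclaurin (z : ℝ) (hz : |z| ≤ 1) :
    Real.arcsin z =
      ∑' k : ℕ, Real.Gamma (k + 1 / 2) /
        (Real.sqrt Real.pi * (2 * k + 1) * k.factorial) * z ^ (2 * k + 1) := by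
  rw [arcsin_maclaurin' z hz]
  exact (tsum_congr (fun k => by rw [coeff_eq k])).symm
end
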